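/- arXiv:1607.04031 — 3 statements merged into one kernel-verified Lean document; each statement's English description precedes it below -/
import Mathlib

section
/- For 2 ≤ j ≤ α, the cardinalities satisfy #T^+_j = #T^-_j + #T^-_{j−1}. -/
/-!
Removing the forced top element `n_j - 1` from the last set of a tuple in `T^+_j` leaves either a
nonempty set, giving a tuple in `T^-_j`, or the empty set, giving (after truncation) a tuple in
`T^-_{j-1}`; re-inserting it is the inverse. Condition P3 into the last set survives both ways
because `0 ≠ n_j - 1` once `n_j ≥ 2`, and P1 survives because the last set is not the first
when `j ≥ 2`.
-/

/-- The set `T^+_j` (for `pos = true`) resp. `T^-_j` (for `pos = false`) of tuples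
`(S_1,…,S_j)` (indexed here from `0`) of nonempty subsets `S_k ⊆ {0,…,n_k−1}`
satisfying P1, P3 (for `k < j`), with `n_j − 1 ∈ S_j` (resp. `n_j − 1 ∉ S_j`),
padded with `∅` beyond position `j`. -/
def Tpm (n : ℕ → ℕ) (j : ℕ) (pos : Bool) : Set (ℕ → Finset ℕ) :=
  {S | (∀ k, j ≤ k → S k = ∅) ∧
       (∀ k, k < j → S k ⊆ Finset.range (n k)) ∧
       (∀ k, k < j → (S k).Nonempty) ∧
       (0 < j → (S 0).card = 1) ∧
       (∀ k, k + 1 < j → n k - 1 ∈ S k → 0 ∈ S (k + 1)) ∧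
       (0 < j → (n (j - 1) - 1 ∈ S (j - 1) ↔ pos = true))}

open Function Set

lemma Tpm_finite (n : ℕ → ℕ) (j : ℕ) (pos : Bool) : (Tpm n j pos).Finite := by
  refine Finite.of_finite_image (f := fun S (k : Fin j) => S k) ?_ ?_
  · refine (Finite.pi fun k : Fin j => (Finset.range (n k)).powerset.finite_toSet).subset ?_
    rintro _ ⟨S, hS, rfl⟩ k -
    exact Finset.mem_coe.2 (Finset.mem_powerset.2 (hS.2.1 k k.2))
  · intro S hS S' hS' h
    funext k
    by_cases hk : k < j
    · exact congrFun h ⟨k, hk⟩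
    · rw [hS.1 k (not_lt.1 hk), hS'.1 k (not_lt.1 hk)]

variable {n : ℕ → ℕ} {i : ℕ} {S : ℕ → Finset ℕ}

lemma top_mem_iff_of_mem_Tpm_succ {pos : Bool} (hS : S ∈ Tpm n (i + 1) pos) :
    n i - 1 ∈ S i ↔ pos = true := by
  simpa using hS.2.2.2.2.2 i.succ_pos

lemma update_mem_Tpm_succ {pos pos' : Bool} {A : Finset ℕ} (hi : 1 ≤ i)
    (hS : S ∈ Tpm n (i + 1) pos) (hA : A ⊆ Finset.range (n i)) (hne : A.Nonempty)
    (h0 : 0 ∈ S i → 0 ∈ A) (hpos : n i - 1 ∈ A ↔ pos' = true) :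
    update S i A ∈ Tpm n (i + 1) pos' := by
  obtain ⟨h1, h2, h3, h4, h5, -⟩ := hS
  refine ⟨fun k hk => ?_, fun k hk => ?_, fun k hk => ?_, fun _ => ?_, fun k hk hmem => ?_,
    fun _ => by simpa using hpos⟩
  · rw [update_of_ne (by omega)]; exact h1 k hk
  · rcases eq_or_ne k i with rfl | hki
    · simpa using hA
    · rw [update_of_ne hki]; exact h2 k hk
  · rcases eq_or_ne k i with rfl | hki
    · simpa using hne
    · rw [update_of_ne hki]; exact h3 k hk
  · rw [update_of_ne (by omega)]; exact h4 (by omega)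
  · rw [update_of_ne (by omega)] at hmem
    rcases eq_or_ne (k + 1) i with hki | hki
    · rw [hki, update_self]; exact h0 (hki ▸ h5 k hk hmem)
    · rw [update_of_ne hki]; exact h5 k hk hmem

lemma update_singleton_mem_Tpm_succ (hS : S ∈ Tpm n i false) (h : 0 < n i) :
    update S i {n i - 1} ∈ Tpm n (i + 1) true := by
  obtain ⟨h1, h2, h3, h4, h5, h6⟩ := hS
  refine ⟨fun k hk => ?_, fun k hk => ?_, fun k hk => ?_, fun _ => ?_, fun k hk hmem => ?_,
    fun _ => by simp⟩
  · rw [update_of_ne (by omega)]; exact h1 k (by omega)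
  · rcases eq_or_ne k i with rfl | hki
    · simpa using h
    · rw [update_of_ne hki]; exact h2 k (by omega)
  · rcases eq_or_ne k i with rfl | hki
    · simp
    · rw [update_of_ne hki]; exact h3 k (by omega)
  · rcases eq_or_ne i 0 with rfl | hi
    · simp
    · rw [update_of_ne hi.symm]; exact h4 (by omega)
  · rw [update_of_ne (by omega)] at hmem
    rcases eq_or_ne (k + 1) i with rfl | hki
    · exact absurd hmem ((h6 (by omega)).not.2 (by simp))
    · rw [update_of_ne hki]; exact h5 k (by omega) hmem

lemma update_empty_mem_Tpm (hS : S ∈ Tpm n (i + 1) true) (hSi : S i = {n i - 1})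
    (h : n i - 1 ≠ 0) : update S i ∅ ∈ Tpm n i false := by
  obtain ⟨h1, h2, h3, h4, h5, -⟩ := hS
  refine ⟨fun k hk => ?_, fun k hk => ?_, fun k hk => ?_, fun _ => ?_, fun k hk hmem => ?_,
    fun _ => ?_⟩
  · rcases eq_or_ne k i with rfl | hki
    · simp
    · rw [update_of_ne hki]; exact h1 k (by omega)
  · rw [update_of_ne (by omega)]; exact h2 k (by omega)
  · rw [update_of_ne (by omega)]; exact h3 k (by omega)
  · rw [update_of_ne (by omega)]; exact h4 (by omega)
  · rw [update_of_ne (by omega)] at hmem ⊢; exact h5 k (by omega) hmem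
  · rw [update_of_ne (by omega), Bool.false_eq_true, iff_false]
    intro hmem
    have := h5 (i - 1) (by omega) hmem
    rw [Nat.sub_add_cancel (by omega), hSi, Finset.mem_singleton] at this
    exact h this.symm

def insertMaxAt (n : ℕ → ℕ) (i : ℕ) (S : ℕ → Finset ℕ) : ℕ → Finset ℕ :=
  update S i (insert (n i - 1) (S i))

lemma insertMaxAt_injOn : InjOn (insertMaxAt n i) {S | n i - 1 ∉ S i} := by
  intro S hS S' hS' h
  have hi : insert (n i - 1) (S i) = insert (n i - 1) (S' i) := by
    simpa [insertMaxAt] using congrFun h i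
  funext k
  rcases eq_or_ne k i with rfl | hk
  · rw [← Finset.erase_insert hS, hi, Finset.erase_insert hS']
  · simpa [insertMaxAt, hk] using congrFun h k

lemma insertMaxAt_erase (T : ℕ → Finset ℕ) (h : n i - 1 ∈ T i) :
    insertMaxAt n i (update T i ((T i).erase (n i - 1))) = T := by
  simp [insertMaxAt, Finset.insert_erase h]

lemma disjoint_Tpm_succ {pos pos' : Bool} : Disjoint (Tpm n (i + 1) pos) (Tpm n i pos') :=
  Set.disjoint_left.2 fun _ hS hS' =>
    (hS.2.2.1 i i.lt_succ_self).ne_empty (hS'.1 i le_rfl)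

lemma Tpm_succ_true_eq_image (hi : 1 ≤ i) (hn : 2 ≤ n i) :
    Tpm n (i + 1) true = insertMaxAt n i '' (Tpm n (i + 1) false ∪ Tpm n i false) := by
  have hmax : n i - 1 ∈ Finset.range (n i) := Finset.mem_range.2 (by omega)
  refine subset_antisymm (fun T hT => ?_) ?_
  · have hTi : n i - 1 ∈ T i := (top_mem_iff_of_mem_Tpm_succ hT).2 rfl
    refine ⟨_, ?_, insertMaxAt_erase T hTi⟩
    by_cases hne : ((T i).erase (n i - 1)).Nonempty
    · have hsub : (T i).erase (n i - 1) ⊆ Finset.range (n i) :=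
        (Finset.erase_subset _ _).trans (hT.2.1 i i.lt_succ_self)
      have h0 (hz : 0 ∈ T i) : 0 ∈ (T i).erase (n i - 1) :=
        Finset.mem_erase.2 ⟨by omega, hz⟩
      exact Or.inl (update_mem_Tpm_succ hi hT hsub hne h0 (by simp))
    · have hempty := Finset.not_nonempty_iff_eq_empty.1 hne
      have hTi' : T i = {n i - 1} := by
        rw [← Finset.insert_erase hTi, hempty, Finset.insert_empty]
      rw [hempty]
      exact Or.inr (update_empty_mem_Tpm hT hTi' (by omega))
  · rintro _ ⟨S, hS | hS, rfl⟩
    · exact update_mem_Tpm_succ hi hS (Finset.insert_subset hmax (hS.2.1 i i.lt_succ_self))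
        (Finset.insert_nonempty _ _) Finset.mem_insert_of_mem (by simp)
    · rw [insertMaxAt, hS.1 i le_rfl, Finset.insert_empty]
      exact update_singleton_mem_Tpm_succ hS (by omega)

lemma ncard_Tpm_succ_true (hi : 1 ≤ i) (hn : 2 ≤ n i) :
    (Tpm n (i + 1) true).ncard = (Tpm n (i + 1) false).ncard + (Tpm n i false).ncard := by
  have hinj : InjOn (insertMaxAt n i) (Tpm n (i + 1) false ∪ Tpm n i false) :=
    insertMaxAt_injOn.mono fun S hS => by
      rcases hS with hS | hS
      · simpa using top_mem_iff_of_mem_Tpm_succ hS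
      · simp [hS.1 i le_rfl]
  rw [Tpm_succ_true_eq_image hi hn, hinj.ncard_image,
    ncard_union_eq disjoint_Tpm_succ (Tpm_finite n _ _) (Tpm_finite n _ _)]

theorem Tpm_plus_eq_minus_add_general (α : ℕ) (n : ℕ → ℕ)
    (hn : ∀ i, i < α → 2 ≤ n i) :
    ∀ j, 2 ≤ j → j ≤ α →
      (Tpm n j true).ncard = (Tpm n j false).ncard + (Tpm n (j - 1) false).ncard := by
  intro j hj hjα
  obtain ⟨i, hi, rfl⟩ : ∃ i, 1 ≤ i ∧ j = i + 1 := ⟨j - 1, by omega, by omega⟩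
  exact ncard_Tpm_succ_true hi (hn i (by omega))

/-- For `2 ≤ j ≤ α`, the cardinalities satisfy `#T^+_j = #T^-_j + #T^-_{j−1}`. -/
theorem Tpm_plus_eq_minus_add (α : ℕ) (hα : 1 ≤ α) (n : ℕ → ℕ)
    (hn : ∀ i, i < α → 2 ≤ n i) :
    ∀ j, 2 ≤ j → j ≤ α →
      (Tpm n j true).ncard = (Tpm n j false).ncard + (Tpm n (j - 1) false).ncard :=
  Tpm_plus_eq_minus_add_general α n hn
end

section
/- For every i ≥ 0, the coefficient of y in the polynomial s^-_i (which is homogeneous of degree 1 in the variables y, z) equals Σ_{c ⊨ i} (−1)^{|c|+i}·(3/2)^{Θ(c)}·[c], where for i = 0 this sum is 0. -/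
open MvPolynomial

/-- We work in `ℚ[x_1,x_2,…][y,z]`: polynomials in the two variables `y` (encoded `false`)
and `z` (encoded `true`) over the ring `ℚ[x_1,x_2,…]`.  `sPair j = (s^-_j, s^+_j)` where
`s^-_0 = z`, `s^+_0 = 2y`, and for `j ≥ 1`,
`s^-_j = (x_j − 1)·s^-_{j−1} + (1/2)·x_j·s^+_{j−1}`,
`s^+_j = x_j·s^-_{j−1} + (1/2)·x_j·s^+_{j−1}`. -/
noncomputable def sPair : ℕ →
    MvPolynomial Bool (MvPolynomial ℕ ℚ) × MvPolynomial Bool (MvPolynomial ℕ ℚ)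
  | 0 => (X true, 2 * X false)
  | j + 1 =>
    ((C (X (j + 1) : MvPolynomial ℕ ℚ) - 1) * (sPair j).1 +
        C ((MvPolynomial.C (1 / 2 : ℚ) * X (j + 1) : MvPolynomial ℕ ℚ)) * (sPair j).2,
      C (X (j + 1) : MvPolynomial ℕ ℚ) * (sPair j).1 +
        C ((MvPolynomial.C (1 / 2 : ℚ) * X (j + 1) : MvPolynomial ℕ ℚ)) * (sPair j).2)

/-- `s^-_j`. -/
noncomputable def smP (j : ℕ) : MvPolynomial Bool (MvPolynomial ℕ ℚ) := (sPair j).1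

/-- The monomial `[c] = x_1·x_{1+c_1}·x_{1+c_1+c_2}···x_{1+c_1+⋯+c_{ℓ−1}}` attached to a
composition with list of parts `l` (with the convention `[()] = 0` for the empty list,
so that the sum below is `0` for `i = 0`). -/
noncomputable def brk (l : List ℕ) : MvPolynomial ℕ ℚ :=
  if l.length = 0 then 0
  else ∏ k ∈ Finset.range l.length, X (1 + (l.take k).sum)

/-- `Θ(c) = #{ j : 1 ≤ j ≤ ℓ−1, c_j = 1 }`. -/
def theta (l : List ℕ) : ℕ :=
  ((l.take (l.length - 1)).filter (· == 1)).length

/-!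
Let `a n`, `b n` be the `y`-coefficients of `s^-_n`, `s^+_n`; they satisfy the same linear
recurrence as the pair `(s^-_n, s^+_n)`. On the combinatorial side, a composition of `n + 2`
either ends in a block `1`, whose removal leaves a composition of `n + 1` and costs a factor
`x_{n+2}` (times `3/2` if the new last block is again `1`), or its last block is `≥ 2`, and
decreasing it only flips the sign. Writing `A n` for the sum of the theorem and `B n` for the
same sum with `Θ` also counting a final block `1`, this gives
`A (n+2) = x_{n+2} B (n+1) - A (n+1)` and `B (n+2) = (3/2) x_{n+2} B (n+1) - A (n+1)`,
and induction shows `a n = A n`, `b n = 2 (B n - A n)` for `n ≥ 1`.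
-/

namespace Composition

variable {n : ℕ}

lemma blocks_ne_nil_of_succ (c : Composition (n + 1)) : c.blocks ≠ [] :=
  fun h => n.succ_ne_zero (c.blocks_eq_nil.1 h)

lemma getLast_pos (c : Composition (n + 1)) : 0 < c.blocks.getLast c.blocks_ne_nil_of_succ :=
  c.blocks_pos (List.getLast_mem _)

lemma sum_dropLast_add_getLast (c : Composition (n + 1)) :
    c.blocks.dropLast.sum + c.blocks.getLast c.blocks_ne_nil_of_succ = n + 1 := by
  have hsum := c.blocks_sum
  rw [← List.dropLast_append_getLast c.blocks_ne_nil_of_succ, List.sum_append,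
    List.sum_singleton] at hsum
  exact hsum

def snocOne (c : Composition n) : Composition (n + 1) where
  blocks := c.blocks ++ [1]
  blocks_pos := by
    intro i hi
    rcases List.mem_append.1 hi with h | h
    · exact c.blocks_pos h
    · simp_all
  blocks_sum := by simp [c.blocks_sum]

def incLast (c : Composition (n + 1)) : Composition (n + 2) where
  blocks := c.blocks.dropLast ++ [c.blocks.getLast c.blocks_ne_nil_of_succ + 1]
  blocks_pos := by
    intro i hi
    rcases List.mem_append.1 hi with h | h
    · exact c.blocks_pos (List.dropLast_subset _ h)
    · simp_all
  blocks_sum := by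
    have := c.sum_dropLast_add_getLast
    simp only [List.sum_append, List.sum_singleton]
    omega

def dropLastOne (d : Composition (n + 2)) (h : d.blocks.getLast d.blocks_ne_nil_of_succ = 1) :
    Composition (n + 1) where
  blocks := d.blocks.dropLast
  blocks_pos hi := d.blocks_pos (List.dropLast_subset _ hi)
  blocks_sum := by
    have := d.sum_dropLast_add_getLast
    omega

def decLast (d : Composition (n + 2)) (h : d.blocks.getLast d.blocks_ne_nil_of_succ ≠ 1) :
    Composition (n + 1) where
  blocks := d.blocks.dropLast ++ [d.blocks.getLast d.blocks_ne_nil_of_succ - 1]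
  blocks_pos := by
    intro i hi
    have := d.getLast_pos
    rcases List.mem_append.1 hi with h | h
    · exact d.blocks_pos (List.dropLast_subset _ h)
    · simp only [List.mem_singleton] at h
      omega
  blocks_sum := by
    have := d.sum_dropLast_add_getLast
    have := d.getLast_pos
    simp only [List.sum_append, List.sum_singleton]
    omega

lemma getLast_snocOne (c : Composition n) :
    c.snocOne.blocks.getLast c.snocOne.blocks_ne_nil_of_succ = 1 :=
  List.getLast_concat

lemma getLast_incLast (c : Composition (n + 1)) :
    c.incLast.blocks.getLast c.incLast.blocks_ne_nil_of_succ =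
      c.blocks.getLast c.blocks_ne_nil_of_succ + 1 :=
  List.getLast_concat

def snocOneSumIncLastEquiv :
    Composition (n + 1) ⊕ Composition (n + 1) ≃ Composition (n + 2) where
  toFun := Sum.elim snocOne incLast
  invFun d :=
    if h : d.blocks.getLast d.blocks_ne_nil_of_succ = 1 then .inl (d.dropLastOne h)
    else .inr (d.decLast h)
  left_inv := by
    rintro (c | c)
    · dsimp only
      rw [Sum.elim_inl, dif_pos c.getLast_snocOne]
      exact congrArg _ (Composition.ext List.dropLast_concat)
    · dsimp only
      have hne : c.incLast.blocks.getLast c.incLast.blocks_ne_nil_of_succ ≠ 1 := by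
        rw [getLast_incLast]
        exact Nat.succ_ne_succ_iff.2 c.getLast_pos.ne'
      rw [Sum.elim_inr, dif_neg hne]
      refine congrArg _ (Composition.ext ?_)
      simp only [decLast, incLast, List.dropLast_concat, List.getLast_concat, Nat.add_sub_cancel]
      exact List.dropLast_append_getLast _
  right_inv d := by
    dsimp only
    by_cases h : d.blocks.getLast d.blocks_ne_nil_of_succ = 1
    · rw [dif_pos h, Sum.elim_inl]
      refine Composition.ext ?_
      conv_rhs => rw [← List.dropLast_append_getLast d.blocks_ne_nil_of_succ, h]
      rfl
    · rw [dif_neg h, Sum.elim_inr]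
      refine Composition.ext ?_
      have := d.getLast_pos
      simp only [incLast, decLast, List.dropLast_concat, List.getLast_concat,
        Nat.sub_add_cancel this]
      exact List.dropLast_append_getLast _

lemma sum_eq_sum_snocOne_add_sum_incLast {M : Type*} [AddCommMonoid M]
    (f : Composition (n + 2) → M) :
    ∑ d, f d =
      ∑ c : Composition (n + 1), f c.snocOne + ∑ c : Composition (n + 1), f c.incLast := by
  rw [← snocOneSumIncLastEquiv.sum_comp, Fintype.sum_sum_type]
  rfl

end Composition

section Weights

variable {l : List ℕ}

lemma theta_eq_count_dropLast (l : List ℕ) : theta l = l.dropLast.count 1 := by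
  rw [List.count_eq_length_filter, List.dropLast_eq_take]
  rfl

lemma theta_append_singleton (l : List ℕ) (a : ℕ) : theta (l ++ [a]) = l.count 1 := by
  rw [theta_eq_count_dropLast, List.dropLast_concat]

lemma theta_dropLast_append (l : List ℕ) (a : ℕ) : theta (l.dropLast ++ [a]) = theta l := by
  rw [theta_append_singleton, theta_eq_count_dropLast]

lemma count_one_dropLast_append {a : ℕ} (ha : a ≠ 1) :
    (l.dropLast ++ [a]).count 1 = theta l := by
  simp [theta_eq_count_dropLast, ha]

lemma brk_append_singleton (l : List ℕ) (a : ℕ) :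
    brk (l ++ [a]) = ∏ k ∈ Finset.range (l.length + 1), X (1 + (l.take k).sum) := by
  rw [brk, if_neg (by simp), List.length_append, List.length_singleton]
  refine Finset.prod_congr rfl fun k hk => ?_
  rw [List.take_append_of_le_length (Nat.lt_succ_iff.1 (Finset.mem_range.1 hk))]

lemma brk_dropLast_append (hl : l ≠ []) (a : ℕ) : brk (l.dropLast ++ [a]) = brk l := by
  conv_rhs => rw [← List.dropLast_append_getLast hl]
  rw [brk_append_singleton, brk_append_singleton]

lemma brk_append_singleton_of_ne_nil (hl : l ≠ []) (a : ℕ) :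
    brk (l ++ [a]) = brk l * X (1 + l.sum) := by
  rw [brk_append_singleton, Finset.prod_range_succ, List.take_length, brk,
    if_neg (mt List.length_eq_zero_iff.1 hl)]

end Weights

noncomputable def signedBracket {n : ℕ} (k : ℕ) (c : Composition n) : MvPolynomial ℕ ℚ :=
  C ((-1 : ℚ) ^ (c.length + n) * (3 / 2 : ℚ) ^ k) * brk c.blocks

noncomputable def bracketSum (θ : List ℕ → ℕ) (n : ℕ) : MvPolynomial ℕ ℚ :=
  ∑ c : Composition n, signedBracket (θ c.blocks) c

section SignedBracket

variable {n : ℕ}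

lemma signedBracket_succ (k : ℕ) (c : Composition n) :
    signedBracket (k + 1) c = C (3 / 2 : ℚ) * signedBracket k c := by
  rw [signedBracket, signedBracket, pow_succ, ← mul_assoc, ← mul_assoc, map_mul]
  ring

lemma signedBracket_snocOne (k : ℕ) (c : Composition (n + 1)) :
    signedBracket k c.snocOne = X (n + 2) * signedBracket k c := by
  have hlen : c.snocOne.length = c.length + 1 := by simp [Composition.length, Composition.snocOne]
  have hsign : (-1 : ℚ) ^ (c.length + 1 + (n + 2)) = (-1) ^ (c.length + (n + 1)) := by
    rw [show c.length + 1 + (n + 2) = c.length + (n + 1) + 2 by omega, pow_add, neg_one_sq,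
      mul_one]
  rw [signedBracket, signedBracket, hlen, hsign, Composition.snocOne,
    brk_append_singleton_of_ne_nil c.blocks_ne_nil_of_succ, c.blocks_sum, add_comm 1]
  ring

lemma signedBracket_incLast (k : ℕ) (c : Composition (n + 1)) :
    signedBracket k c.incLast = -signedBracket k c := by
  have hlen : c.incLast.length = c.length := by
    simp [Composition.length, Composition.incLast, Nat.sub_add_cancel
      (List.length_pos_iff.2 c.blocks_ne_nil_of_succ)]
  rw [signedBracket, signedBracket, hlen, Composition.incLast,
    brk_dropLast_append c.blocks_ne_nil_of_succ, show c.length + (n + 2) = c.length + (n + 1) + 1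
      by omega, pow_succ]
  simp only [map_mul, map_neg, map_one]
  ring

end SignedBracket

lemma bracketSum_theta_succ_succ (n : ℕ) :
    bracketSum theta (n + 2) =
      X (n + 2) * bracketSum (List.count 1) (n + 1) - bracketSum theta (n + 1) := by
  have hsnoc (c : Composition (n + 1)) :
      signedBracket (theta c.snocOne.blocks) c.snocOne =
        X (n + 2) * signedBracket (c.blocks.count 1) c := by
    rw [signedBracket_snocOne, Composition.snocOne, theta_append_singleton]
  have hinc (c : Composition (n + 1)) :
      signedBracket (theta c.incLast.blocks) c.incLast = -signedBracket (theta c.blocks) c := by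
    rw [signedBracket_incLast, Composition.incLast, theta_dropLast_append]
  simp only [bracketSum, Composition.sum_eq_sum_snocOne_add_sum_incLast, hsnoc, hinc,
    Finset.sum_neg_distrib, Finset.mul_sum, sub_eq_add_neg]

lemma bracketSum_count_one_succ_succ (n : ℕ) :
    bracketSum (List.count 1) (n + 2) =
      C (3 / 2 : ℚ) * X (n + 2) * bracketSum (List.count 1) (n + 1) -
        bracketSum theta (n + 1) := by
  have hsnoc (c : Composition (n + 1)) :
      signedBracket (c.snocOne.blocks.count 1) c.snocOne =
        C (3 / 2 : ℚ) * X (n + 2) * signedBracket (c.blocks.count 1) c := by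
    rw [signedBracket_snocOne, Composition.snocOne, List.count_append, List.count_singleton_self,
      signedBracket_succ]
    ring
  have hinc (c : Composition (n + 1)) :
      signedBracket (c.incLast.blocks.count 1) c.incLast = -signedBracket (theta c.blocks) c := by
    rw [signedBracket_incLast, Composition.incLast,
      count_one_dropLast_append (Nat.succ_ne_succ_iff.2 c.getLast_pos.ne')]
  simp only [bracketSum, Composition.sum_eq_sum_snocOne_add_sum_incLast, hsnoc, hinc,
    Finset.sum_neg_distrib, Finset.mul_sum, sub_eq_add_neg]

lemma bracketSum_zero (θ : List ℕ → ℕ) : bracketSum θ 0 = 0 :=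
  Finset.sum_eq_zero fun c _ => by
    rw [signedBracket, (c.blocks_eq_nil).2 rfl, brk, if_pos List.length_nil, mul_zero]

lemma bracketSum_one (θ : List ℕ → ℕ) :
    bracketSum θ 1 = C ((3 / 2 : ℚ) ^ θ [1]) * X 1 := by
  have hones (c : Composition 1) : c = Composition.ones 1 :=
    Composition.eq_ones_iff_le_length.2 (c.length_pos_iff.2 one_pos)
  rw [bracketSum, Fintype.sum_eq_single (Composition.ones 1) fun c hc => absurd (hones c) hc]
  simp [signedBracket, brk]

lemma coeff_y_sPair_zero :
    coeff (Finsupp.single false 1) (sPair 0).1 = 0 ∧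
      coeff (Finsupp.single false 1) (sPair 0).2 = 2 := by
  refine ⟨?_, ?_⟩
  · rw [sPair, coeff_X, if_neg ((Finsupp.single_left_injective one_ne_zero).ne Bool.noConfusion)]
  · rw [sPair, ← map_ofNat C 2, coeff_C_mul, coeff_X_same, mul_one]

lemma coeff_y_sPair_succ (n : ℕ) :
    coeff (Finsupp.single false 1) (sPair (n + 1)).1 =
        (X (n + 1) - 1) * coeff (Finsupp.single false 1) (sPair n).1 +
          C (1 / 2 : ℚ) * X (n + 1) * coeff (Finsupp.single false 1) (sPair n).2 ∧
      coeff (Finsupp.single false 1) (sPair (n + 1)).2 =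
        X (n + 1) * coeff (Finsupp.single false 1) (sPair n).1 +
          C (1 / 2 : ℚ) * X (n + 1) * coeff (Finsupp.single false 1) (sPair n).2 := by
  refine ⟨?_, ?_⟩ <;>
  simp only [sPair, coeff_add, coeff_C_mul, sub_mul, coeff_sub, one_mul]

lemma coeff_y_sPair_succ_eq_bracketSum (n : ℕ) :
    coeff (Finsupp.single false 1) (sPair (n + 1)).1 = bracketSum theta (n + 1) ∧
      coeff (Finsupp.single false 1) (sPair (n + 1)).2 =
        2 * (bracketSum (List.count 1) (n + 1) - bracketSum theta (n + 1)) := by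
  have half : C (1 / 2 : ℚ) * (2 : MvPolynomial ℕ ℚ) = 1 := by
    rw [← map_ofNat C 2, ← map_mul]; norm_num
  have three_halves : C (3 / 2 : ℚ) = C (1 / 2 : ℚ) + (1 : MvPolynomial ℕ ℚ) := by
    rw [← map_one C, ← map_add]; norm_num
  induction n with
  | zero =>
    obtain ⟨ha, hb⟩ := coeff_y_sPair_zero
    obtain ⟨ha', hb'⟩ := coeff_y_sPair_succ 0
    have hθ : theta [1] = 0 := rfl
    rw [ha', hb', ha, hb, bracketSum_one, bracketSum_one, hθ, List.count_singleton_self,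
      pow_zero, pow_one, map_one]
    constructor
    · linear_combination X 1 * half
    · linear_combination (-2 * X 1) * three_halves
  | succ n ih =>
    obtain ⟨ha, hb⟩ := ih
    obtain ⟨ha', hb'⟩ := coeff_y_sPair_succ (n + 1)
    rw [ha', hb', ha, hb, bracketSum_theta_succ_succ, bracketSum_count_one_succ_succ]
    constructor
    · linear_combination (X (n + 2) * (bracketSum (List.count 1) (n + 1) -
        bracketSum theta (n + 1))) * half
    · linear_combination (-X (n + 2) * bracketSum theta (n + 1)) * half -
        (2 * X (n + 2) * bracketSum (List.count 1) (n + 1)) * three_halves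

/-- For every `i ≥ 0`, the coefficient of `y` in `s^-_i` equals
`Σ_{c ⊨ i} (−1)^{|c|+i}·(3/2)^{Θ(c)}·[c]` (which is `0` for `i = 0`). -/
theorem coeff_y_smP (i : ℕ) :
    MvPolynomial.coeff (Finsupp.single false 1) (smP i) =
      ∑ c : Composition i,
        MvPolynomial.C ((-1 : ℚ) ^ (c.length + i) * (3 / 2 : ℚ) ^ theta c.blocks) *
          brk c.blocks := by
  change _ = bracketSum theta i
  cases i with
  | zero => rw [bracketSum_zero]; exact coeff_y_sPair_zero.1
  | succ n => exact (coeff_y_sPair_succ_eq_bracketSum n).1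
end

section
/- In the DFA A obtained by the subset construction from the concatenation NFA A_1·A_2 of the two-letter Brzozowski pair, any two distinct valid states (p_i, S) and (p_{i'}, S') are non-equivalent: there is a word w over {a,b} such that exactly one of the two resulting states contains the final state q_{n−1}. -/
/-!
A subset state `{p_i} ∪ S` of the concatenation evolves as a pair: `A_1` runs deterministically,
and after a word `w` the `A_2`-part consists of the images of `S` under `w` together with the
images of `q_0` under every suffix of `w` whose complementary nonempty prefix `A_1` accepts.

If `S ≠ S'`, pick `q_j` in the symmetric difference: `a^(n-1-j)` moves `q_j` to `q_{n-1}`,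
while no `q_0` injected on the way gets that far. If `S = S'`, then `i ≠ i'`. The letter `b`
removes `q_1` from the `A_2`-part; after that, `a^(2n-2)` only brings to `q_{n-1}` a `q_0`
injected exactly `n - 1` letters before the end. So `a^r b a^(2n-2)` reaches `q_{n-1}` from
`(p_k, T)` iff `a^r b a^(n-1)` takes `p_k` to `p_{m-1}`. Since every letter permutes the
states of `A_1` and `a` is a full cycle, some `r` does this for `i`, and then it fails for
every `i' ≠ i`.
-/

/-- The concatenation NFA `A·B` of two NFAs with disjoint state sets (modelled by the
sum type `σ₁ ⊕ σ₂`): its states are `Q_A ∪ Q_B`, its final states are `F_B`,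
its initial states are `I_A` if `I_A ∩ F_A = ∅` and `I_A ∪ I_B` otherwise, and its
transitions are: for `q ∈ Q_B`, `δ(q,x) = δ_B(q,x)`; for `q ∈ Q_A`,
`δ(q,x) = δ_A(q,x)` if `δ_A(q,x) ∩ F_A = ∅`, and `δ(q,x) = δ_A(q,x) ∪ I_B` otherwise. -/
def nfaConcat {Sig σ₁ σ₂ : Type*} (A : NFA Sig σ₁) (B : NFA Sig σ₂) :
    NFA Sig (σ₁ ⊕ σ₂) where
  step q a :=
    match q with
    | Sum.inl q =>
        Sum.inl '' A.step q a ∪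
          {x | (A.step q a ∩ A.accept).Nonempty ∧ x ∈ Sum.inr '' B.start}
    | Sum.inr q => Sum.inr '' B.step q a
  start :=
    Sum.inl '' A.start ∪ {x | (A.start ∩ A.accept).Nonempty ∧ x ∈ Sum.inr '' B.start}
  accept := Sum.inr '' B.accept

/-- The first DFA of the two-letter Brzozowski pair: states `p_0,…,p_{m−1}`, initial
state `p_0`, unique final state `p_{m−1}`; the letter `a` (encoded `0 : Fin 2`) acts as
the cyclic permutation `p_i ↦ p_{(i+1) mod m}` and `b` (encoded `1`) acts as the
transposition exchanging `p_0` and `p_1`. -/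
def dfaW1 (m : ℕ) (h : 0 < m) : DFA (Fin 2) (Fin m) where
  step i x :=
    if x = 0 then ⟨(i.val + 1) % m, Nat.mod_lt _ h⟩
    else ⟨(if i.val = 0 then 1 else if i.val = 1 then 0 else i.val) % m, Nat.mod_lt _ h⟩
  start := ⟨0, h⟩
  accept := {⟨m - 1, by omega⟩}

/-- The second DFA of the two-letter Brzozowski pair: states `q_0,…,q_{n−1}`, initial
state `q_0`, unique final state `q_{n−1}`; the letter `a` acts as the cyclic permutation
`q_j ↦ q_{(j+1) mod n}` and `b` acts as the contraction sending `q_1` to `q_0` and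
fixing all other states. -/
def dfaW2 (n : ℕ) (h : 0 < n) : DFA (Fin 2) (Fin n) where
  step j x :=
    if x = 0 then ⟨(j.val + 1) % n, Nat.mod_lt _ h⟩
    else ⟨(if j.val = 1 then 0 else j.val) % n, Nat.mod_lt _ h⟩
  start := ⟨0, h⟩
  accept := {⟨n - 1, by omega⟩}

theorem Nat.mod_eq_sub_one_iff {x n : ℕ} (hx : x < 2 * n - 1) : x % n = n - 1 ↔ x = n - 1 := by
  rcases Nat.lt_or_ge x n with h | h
  · rw [Nat.mod_eq_of_lt h]
  · rw [Nat.mod_eq_sub_mod h, Nat.mod_eq_of_lt (by omega)]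
    omega

namespace DFA

variable {α σ : Type*}

theorem evalFrom_injective (M : DFA α σ) (h : ∀ x, Function.Injective (M.step · x))
    (w : List α) : Function.Injective (M.evalFrom · w) := by
  induction w with
  | nil => exact fun _ _ => id
  | cons x w ih => exact ih.comp (h x)

variable {N : ℕ} (M : DFA α (Fin N)) {x : α}

theorem val_evalFrom_replicate_of_cyclic (hx : ∀ k, (M.step k x).val = (k.val + 1) % N)
    (k : Fin N) (L : ℕ) :
    (M.evalFrom k (List.replicate L x)).val = (k.val + L) % N := by
  induction L generalizing k with
  | zero => simp [Nat.mod_eq_of_lt k.isLt]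
  | succ L ih =>
    rw [List.replicate_succ, evalFrom_cons, ih, hx, Nat.mod_add_mod, add_right_comm, add_assoc]

theorem exists_evalFrom_replicate_append_eq_of_cyclic
    (hx : ∀ k, (M.step k x).val = (k.val + 1) % N)
    (hinj : ∀ y, Function.Injective (M.step · y)) (k k' : Fin N) (w : List α) :
    ∃ r, M.evalFrom k (List.replicate r x ++ w) = k' := by
  obtain ⟨k₀, hk₀⟩ := Finite.injective_iff_surjective.mp (M.evalFrom_injective hinj w) k'
  refine ⟨k₀.val + N - k.val, ?_⟩
  have hrot : M.evalFrom k (List.replicate (k₀.val + N - k.val) x) = k₀ := by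
    ext
    rw [M.val_evalFrom_replicate_of_cyclic hx, show k.val + (k₀.val + N - k.val) = k₀.val + N by
      omega, Nat.add_mod_right, Nat.mod_eq_of_lt k₀.isLt]
  rw [evalFrom_of_append, hrot]
  exact hk₀

end DFA

section concatReach

variable {α σ₁ σ₂ : Type*} (A : DFA α σ₁) (B : DFA α σ₂)

def concatReach (p : σ₁) (S : Set σ₂) (w : List α) : Set σ₂ :=
  (B.evalFrom · w) '' S ∪
    {q | ∃ t, 0 < t ∧ t ≤ w.length ∧ A.evalFrom p (w.take t) ∈ A.accept ∧
      B.evalFrom B.start (w.drop t) = q}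

theorem nfaConcat_toDFA_step_inl_union_inr (p : σ₁) (S : Set σ₂) (x : α) :
    (nfaConcat A.toNFA B.toNFA).toDFA.step ({Sum.inl p} ∪ Sum.inr '' S) x =
      {Sum.inl (A.step p x)} ∪
        Sum.inr '' ((B.step · x) '' S ∪ {q | A.step p x ∈ A.accept ∧ q = B.start}) := by
  ext (r | q) <;> simp [NFA.toDFA, NFA.stepSet, nfaConcat, and_comm, eq_comm, or_comm]

@[simp]
theorem concatReach_nil (p : σ₁) (S : Set σ₂) : concatReach A B p S [] = S := by
  ext q
  simp [concatReach]

theorem concatReach_cons (p : σ₁) (S : Set σ₂) (x : α) (w : List α) :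
    concatReach A B p S (x :: w) =
      concatReach A B (A.step p x)
        ((B.step · x) '' S ∪ {q | A.step p x ∈ A.accept ∧ q = B.start}) w := by
  ext q
  simp only [concatReach, Set.mem_union, Set.mem_image, Set.mem_ofPred_eq, List.length_cons,
    DFA.evalFrom_cons]
  constructor
  · rintro (⟨s, hs, rfl⟩ | ⟨_ | t, ht0, ht, hacc, rfl⟩)
    · exact Or.inl ⟨_, Or.inl ⟨s, hs, rfl⟩, rfl⟩
    · omega
    · rcases t with _ | t
      · exact Or.inl ⟨B.start, Or.inr ⟨by simpa using hacc, rfl⟩, by simp⟩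
      · exact Or.inr ⟨t + 1, by omega, by omega, by simpa using hacc, by simp⟩
  · rintro (⟨_, ⟨s, hs, rfl⟩ | ⟨hacc, rfl⟩, rfl⟩ | ⟨t, ht0, ht, hacc, rfl⟩)
    · exact Or.inl ⟨s, hs, rfl⟩
    · exact Or.inr ⟨1, by omega, by omega, by simpa using hacc, by simp⟩
    · exact Or.inr ⟨t + 1, by omega, by omega, by simpa using hacc, by simp⟩

theorem nfaConcat_toDFA_evalFrom (p : σ₁) (S : Set σ₂) (w : List α) :
    (nfaConcat A.toNFA B.toNFA).toDFA.evalFrom ({Sum.inl p} ∪ Sum.inr '' S) w =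
      {Sum.inl (A.evalFrom p w)} ∪ Sum.inr '' concatReach A B p S w := by
  induction w generalizing p S with
  | nil => simp
  | cons x w ih =>
    rw [DFA.evalFrom_cons, DFA.evalFrom_cons, concatReach_cons, ← ih,
      nfaConcat_toDFA_step_inl_union_inr]

theorem inr_mem_nfaConcat_toDFA_evalFrom_iff (p : σ₁) (S : Set σ₂) (w : List α) (q : σ₂) :
    Sum.inr q ∈ (nfaConcat A.toNFA B.toNFA).toDFA.evalFrom ({Sum.inl p} ∪ Sum.inr '' S) w ↔
      q ∈ concatReach A B p S w := by
  rw [nfaConcat_toDFA_evalFrom]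
  simp

theorem mem_concatReach_replicate (p : σ₁) (S : Set σ₂) (x : α) (L : ℕ) (q : σ₂) :
    q ∈ concatReach A B p S (List.replicate L x) ↔
      (∃ s ∈ S, B.evalFrom s (List.replicate L x) = q) ∨
        ∃ t, 0 < t ∧ t ≤ L ∧ A.evalFrom p (List.replicate t x) ∈ A.accept ∧
          B.evalFrom B.start (List.replicate (L - t) x) = q := by
  simp only [concatReach, Set.mem_union, Set.mem_image, Set.mem_ofPred_eq, List.length_replicate,
    List.drop_replicate, List.take_replicate]
  refine or_congr Iff.rfl (exists_congr fun t => ?_)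
  constructor <;> rintro ⟨ht0, ht, h⟩ <;> simpa [ht0, ht, min_eq_left ht] using h

end concatReach

section BrzozowskiPair

variable {m n : ℕ}

@[simp]
theorem dfaW1_accept (hm : 0 < m) : (dfaW1 m hm).accept = {⟨m - 1, by omega⟩} := rfl

@[simp]
theorem dfaW2_start (hn : 0 < n) : (dfaW2 n hn).start = ⟨0, hn⟩ := rfl

theorem dfaW1_step_zero_val (hm : 0 < m) (k : Fin m) :
    ((dfaW1 m hm).step k 0).val = (k.val + 1) % m := rfl

theorem dfaW2_step_zero_val (hn : 0 < n) (s : Fin n) :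
    ((dfaW2 n hn).step s 0).val = (s.val + 1) % n := rfl

theorem dfaW2_step_one_val_ne_one (hn : 0 < n) (s : Fin n) :
    ((dfaW2 n hn).step s 1).val ≠ 1 := by
  show (if s.val = 1 then 0 else s.val) % n ≠ 1
  split_ifs
  · simp
  · rwa [Nat.mod_eq_of_lt s.isLt]

theorem dfaW1_step_injective (hm : 0 < m) (x : Fin 2) :
    Function.Injective ((dfaW1 m hm).step · x) := by
  obtain rfl | hm2 : m = 1 ∨ 2 ≤ m := by omega
  · exact fun k k' _ => Subsingleton.elim k k'
  intro k k' h
  have hk := k.isLt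
  have hk' := k'.isLt
  fin_cases x
  · have h' : (k.val + 1) % m = (k'.val + 1) % m := congrArg Fin.val h
    ext
    simpa [Nat.ModEq, Nat.mod_eq_of_lt hk, Nat.mod_eq_of_lt hk'] using
      Nat.ModEq.add_right_cancel' 1 h'
  · have h' : (if k.val = 0 then 1 else if k.val = 1 then 0 else k.val) % m =
        (if k'.val = 0 then 1 else if k'.val = 1 then 0 else k'.val) % m := congrArg Fin.val h
    rw [Nat.mod_eq_of_lt (by split_ifs <;> omega), Nat.mod_eq_of_lt (by split_ifs <;> omega)] at h'
    ext
    split_ifs at h' <;> omega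

theorem last_mem_concatReach_replicate_iff (hm : 0 < m) (hn : 0 < n) (k : Fin m)
    (T : Set (Fin n)) (j : Fin n) :
    (⟨n - 1, by omega⟩ : Fin n) ∈
        concatReach (dfaW1 m hm) (dfaW2 n hn) k T (List.replicate (n - 1 - j) 0) ↔ j ∈ T := by
  have hj := j.isLt
  simp only [mem_concatReach_replicate, Fin.ext_iff,
    DFA.val_evalFrom_replicate_of_cyclic _ (dfaW2_step_zero_val hn), dfaW2_start]
  constructor
  · rintro (⟨s, hs, h⟩ | ⟨t, ht0, ht, -, h⟩)
    · rw [Nat.mod_eq_sub_one_iff (by omega)] at h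
      rwa [show j = s by ext; omega]
    · rw [Nat.mod_eq_sub_one_iff (by omega)] at h
      omega
  · exact fun hjT => Or.inl ⟨j, hjT, (Nat.mod_eq_sub_one_iff (by omega)).2 (by omega)⟩

theorem last_mem_concatReach_replicate_two_mul_iff (hm : 0 < m) (hn : 2 ≤ n) (k : Fin m)
    (T : Set (Fin n)) (hT : ∀ s ∈ T, s.val ≠ 1) :
    (⟨n - 1, by omega⟩ : Fin n) ∈
        concatReach (dfaW1 m hm) (dfaW2 n (by omega)) k T (List.replicate (2 * n - 2) 0) ↔
      (dfaW1 m hm).evalFrom k (List.replicate (n - 1) 0) = ⟨m - 1, by omega⟩ := by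
  simp only [mem_concatReach_replicate, Fin.ext_iff,
    DFA.val_evalFrom_replicate_of_cyclic _ (dfaW2_step_zero_val _), dfaW2_start, dfaW1_accept,
    Set.mem_singleton_iff]
  constructor
  · rintro (⟨s, hs, h⟩ | ⟨t, ht0, ht, hacc, h⟩)
    · have hs' := s.isLt
      rw [show s.val + (2 * n - 2) = s.val + n - 2 + n by omega, Nat.add_mod_right,
        Nat.mod_eq_sub_one_iff (by omega)] at h
      exact absurd (by omega) (hT s hs)
    · rw [Nat.mod_eq_sub_one_iff (by omega)] at h
      rwa [show t = n - 1 by omega] at hacc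
  · exact fun h => Or.inr ⟨n - 1, by omega, by omega, h,
      (Nat.mod_eq_sub_one_iff (by omega)).2 (by omega)⟩

theorem inr_last_mem_evalFrom_replicate_iff (hm : 0 < m) (hn : 0 < n) (k : Fin m)
    (T : Set (Fin n)) (j : Fin n) :
    Sum.inr (⟨n - 1, by omega⟩ : Fin n) ∈
        (nfaConcat (dfaW1 m hm).toNFA (dfaW2 n hn).toNFA).toDFA.evalFrom
          ({Sum.inl k} ∪ Sum.inr '' T) (List.replicate (n - 1 - j) 0) ↔ j ∈ T := by
  rw [inr_mem_nfaConcat_toDFA_evalFrom_iff, last_mem_concatReach_replicate_iff]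

theorem inr_last_mem_evalFrom_replicate_one_replicate_iff (hm : 0 < m) (hn : 2 ≤ n) (k : Fin m)
    (T : Set (Fin n)) (r : ℕ) :
    Sum.inr (⟨n - 1, by omega⟩ : Fin n) ∈
        (nfaConcat (dfaW1 m hm).toNFA (dfaW2 n (by omega)).toNFA).toDFA.evalFrom
          ({Sum.inl k} ∪ Sum.inr '' T)
          (List.replicate r 0 ++ 1 :: List.replicate (2 * n - 2) 0) ↔
      (dfaW1 m hm).evalFrom k (List.replicate r 0 ++ 1 :: List.replicate (n - 1) 0) =
        ⟨m - 1, by omega⟩ := by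
  rw [DFA.evalFrom_of_append, DFA.evalFrom_cons, nfaConcat_toDFA_evalFrom,
    nfaConcat_toDFA_step_inl_union_inr, inr_mem_nfaConcat_toDFA_evalFrom_iff,
    last_mem_concatReach_replicate_two_mul_iff _ hn, DFA.evalFrom_of_append, DFA.evalFrom_cons]
  rintro s (⟨s', -, rfl⟩ | ⟨-, rfl⟩)
  · exact dfaW2_step_one_val_ne_one _ s'
  · simp

end BrzozowskiPair

/-- In the DFA obtained by the subset construction from the concatenation NFA `A_1·A_2`
of the two-letter Brzozowski pair, any two distinct valid states `(p_i, S)` and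
`(p_{i'}, S')` — identified with the subsets `{p_i} ∪ {q_j : j ∈ S}`, with `q_0 ∈ S`
whenever `i = m−1` — are non-equivalent: some word `w` sends exactly one of them to a
set containing the final state `q_{n−1}`. -/
theorem two_letter_valid_states_nonequivalent (m n : ℕ) (hm : 3 ≤ m) (hn : 3 ≤ n)
    (i i' : Fin m) (S S' : Set (Fin n))
    (hne : ¬ (i = i' ∧ S = S')) :
    ∃ w : List (Fin 2),
      ¬ ((Sum.inr (⟨n - 1, by omega⟩ : Fin n) ∈
            (nfaConcat (dfaW1 m (by omega)).toNFA (dfaW2 n (by omega)).toNFA).toDFA.evalFrom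
              ({Sum.inl i} ∪ Sum.inr '' S) w) ↔
         (Sum.inr (⟨n - 1, by omega⟩ : Fin n) ∈
            (nfaConcat (dfaW1 m (by omega)).toNFA (dfaW2 n (by omega)).toNFA).toDFA.evalFrom
              ({Sum.inl i'} ∪ Sum.inr '' S') w)) := by
  by_cases hS : S = S'
  · subst hS
    have hii : i ≠ i' := fun h => hne ⟨h, rfl⟩
    obtain ⟨r, hr⟩ := (dfaW1 m (by omega)).exists_evalFrom_replicate_append_eq_of_cyclic
      (dfaW1_step_zero_val _) (dfaW1_step_injective _) i ⟨m - 1, by omega⟩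
      (1 :: List.replicate (n - 1) 0)
    refine ⟨List.replicate r 0 ++ 1 :: List.replicate (2 * n - 2) 0, ?_⟩
    rw [inr_last_mem_evalFrom_replicate_one_replicate_iff _ (by omega),
      inr_last_mem_evalFrom_replicate_one_replicate_iff _ (by omega), hr]
    exact fun h => hii <| DFA.evalFrom_injective _ (dfaW1_step_injective _) _ <|
      hr.trans (h.mp rfl).symm
  · obtain ⟨j, hj⟩ : ∃ j, ¬ (j ∈ S ↔ j ∈ S') := by
      simpa [Set.ext_iff] using hS
    refine ⟨List.replicate (n - 1 - j) 0, ?_⟩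
    rwa [inr_last_mem_evalFrom_replicate_iff, inr_last_mem_evalFrom_replicate_iff]
end
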